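/- arXiv:2004.06758 — 2 statements merged into one kernel-verified Lean document; each statement's English description precedes it below -/
import Mathlib

section
/- Let a, λ, c₀, r₁, α₃ be complex numbers with λ ≠ 0 and c₀ ≠ 0, and set p = (λ² − a·r₁²)/(i·λ·c₀), q = λ/(i·c₀). Let M₂ be the 4×4 complex matrix with rows: row 1 = (sin(r₁α₃), cos(r₁α₃), α₃, 1); row 2 = (r₁cos(r₁α₃), −r₁sin(r₁α₃), 1, 0); row 3 = (p·sin(r₁α₃), p·cos(r₁α₃), q·α₃, q); row 4 = (p·r₁cos(r₁α₃), −p·r₁sin(r₁α₃), q, 0). Then det(M₂) = −a²·r₁⁵/(λ²·c₀²). -/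
/-!
Subtracting `p` times the first two rows of `M₂` from the last two leaves a block upper
triangular matrix with diagonal blocks `[[sin, cos], [r₁ cos, -r₁ sin]]`, of determinant `-r₁`,
and `(q - p) • [[α₃, 1], [1, 0]]`, of determinant `-(q - p)²`. Hence `det M₂ = r₁ (q - p)²`,
and `q - p = a r₁² / (i λ c₀)`.
-/

open Complex Matrix

theorem Matrix.det_fromBlocks_smul {R n : Type*} [CommRing R] [Fintype n] [DecidableEq n]
    (A B : Matrix n n R) (p q : R) :
    (fromBlocks A B (p • A) (q • B)).det = (q - p) ^ Fintype.card n * A.det * B.det := by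
  have row_reduction : fromBlocks A B (p • A) (q • B)
      = fromBlocks 1 0 (p • 1) 1 * fromBlocks A B 0 ((q - p) • B) := by
    simp only [fromBlocks_multiply, Matrix.one_mul, Matrix.zero_mul, add_zero, Matrix.smul_mul,
      sub_smul]
    congr 1
    abel
  rw [row_reduction, det_mul, det_fromBlocks_zero₁₂, det_fromBlocks_zero₂₁, det_one, det_smul]
  ring

theorem det_boundary_matrix {R : Type*} [CommRing R] (s c r α p q : R) :
    !![s, c, α, 1; r * c, -(r * s), 1, 0;
      p * s, p * c, q * α, q; p * r * c, -(p * r * s), q, 0].det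
      = r * (s ^ 2 + c ^ 2) * (q - p) ^ 2 := by
  have as_blocks : !![s, c, α, 1; r * c, -(r * s), 1, 0;
      p * s, p * c, q * α, q; p * r * c, -(p * r * s), q, 0]
      = reindex finSumFinEquiv finSumFinEquiv
          (fromBlocks !![s, c; r * c, -(r * s)] !![α, 1; 1, 0]
            (p • !![s, c; r * c, -(r * s)]) (q • !![α, 1; 1, 0])) := by
    have h0 : (finSumFinEquiv (m := 2) (n := 2)).symm 0 = Sum.inl 0 := rfl
    have h1 : (finSumFinEquiv (m := 2) (n := 2)).symm 1 = Sum.inl 1 := rfl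
    have h2 : (finSumFinEquiv (m := 2) (n := 2)).symm 2 = Sum.inr 0 := rfl
    have h3 : (finSumFinEquiv (m := 2) (n := 2)).symm 3 = Sum.inr 1 := rfl
    ext i j
    fin_cases i <;> fin_cases j <;>
      simp only [reindex_apply, submatrix_apply, h0, h1, h2, h3, Fin.isValue, Fin.mk_one,
        Fin.reduceFinMk, Fin.zero_eta, Nat.reduceAdd, of_apply, cons_val, cons_val', cons_val_zero,
        cons_val_one, cons_val_fin_one, fromBlocks_apply₁₁, fromBlocks_apply₁₂, fromBlocks_apply₂₁,
        fromBlocks_apply₂₂, smul_of, smul_cons, smul_empty, smul_eq_mul, mul_one, mul_zero,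
        mul_neg] <;> ring
  rw [as_blocks, det_reindex_self, det_fromBlocks_smul, det_fin_two_of, det_fin_two_of]
  simp only [Fintype.card_fin]
  ring

/-- determinant of the boundary-condition matrix M₂ (degenerate case λ² = c₀²). -/
theorem stmt6 (a lam c₀ r₁ α₃ : ℂ) (hlam : lam ≠ 0) (hc : c₀ ≠ 0)
    (p q : ℂ)
    (hp : p = (lam ^ 2 - a * r₁ ^ 2) / (Complex.I * lam * c₀))
    (hq : q = lam / (Complex.I * c₀)) :
    Matrix.det
      !![Complex.sin (r₁ * α₃), Complex.cos (r₁ * α₃), α₃, 1;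
         r₁ * Complex.cos (r₁ * α₃), -(r₁ * Complex.sin (r₁ * α₃)), 1, 0;
         p * Complex.sin (r₁ * α₃), p * Complex.cos (r₁ * α₃), q * α₃, q;
         p * r₁ * Complex.cos (r₁ * α₃), -(p * r₁ * Complex.sin (r₁ * α₃)), q, 0]
      = -(a ^ 2 * r₁ ^ 5) / (lam ^ 2 * c₀ ^ 2) := by
  have hq_sub_p : q - p = a * r₁ ^ 2 / (I * lam * c₀) := by
    rw [hp, hq]
    field_simp
    ring
  rw [det_boundary_matrix, sin_sq_add_cos_sq, hq_sub_p]
  simp only [div_pow, mul_pow, I_sq]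
  field_simp
end

section
/- Let a, λ, c₀, r₁, r₂, α₃ be complex numbers with λ ≠ 0 and c₀ ≠ 0, and set p = (λ² − a·r₁²)/(i·λ·c₀), q = (λ² − a·r₂²)/(i·λ·c₀). Let M₃ be the 4×4 complex matrix with rows: row 1 = (sin(r₁α₃), cos(r₁α₃), sin(r₂α₃), cos(r₂α₃)); row 2 = (r₁cos(r₁α₃), −r₁sin(r₁α₃), r₂cos(r₂α₃), −r₂sin(r₂α₃)); row 3 = (p·sin(r₁α₃), p·cos(r₁α₃), q·sin(r₂α₃), q·cos(r₂α₃)); row 4 = (p·r₁cos(r₁α₃), −p·r₁sin(r₁α₃), q·r₂cos(r₂α₃), −q·r₂sin(r₂α₃)). Then det(M₃) = −r₁·r₂·a²·(r₁² − r₂²)²/(λ²·c₀²). -/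
/-!
Split rows and columns of `M₃` into pairs. The upper blocks are the Wronskian matrices `W₁`, `W₂`
of `x ↦ sin (rᵢ x), cos (rᵢ x)` at `α₃`, and the lower blocks are `p • W₁`, `q • W₂`. Subtracting
`p` times the upper rows from the lower ones leaves a block triangular matrix with diagonal blocks
`W₁` and `(q - p) • W₂`, so `det M₃ = (q - p)² det W₁ det W₂ = r₁ r₂ (q - p)²`, and
`q - p = a (r₁² - r₂²) / (i λ c₀)`.
-/

open Complex

theorem Matrix.det_fromBlocks_smul_smul {R n : Type*} [CommRing R] [Fintype n] [DecidableEq n]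
    (p q : R) (A B : Matrix n n R) :
    (Matrix.fromBlocks A B (p • A) (q • B)).det = (q - p) ^ Fintype.card n * A.det * B.det := by
  have hfactor : Matrix.fromBlocks A B (p • A) (q • B)
      = Matrix.fromBlocks 1 0 (p • 1) 1 * Matrix.fromBlocks A B 0 ((q - p) • B) := by
    simp only [Matrix.fromBlocks_multiply, Matrix.one_mul, Matrix.zero_mul, add_zero,
      Matrix.smul_mul, sub_smul]
    abel_nf
  rw [hfactor, Matrix.det_mul, Matrix.det_fromBlocks_zero₁₂, Matrix.det_fromBlocks_zero₂₁,
    Matrix.det_smul, Matrix.det_one]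
  ring

noncomputable def sinCosWronskian (r x : ℂ) : Matrix (Fin 2) (Fin 2) ℂ :=
  !![sin (r * x), cos (r * x); r * cos (r * x), -(r * sin (r * x))]

theorem det_sinCosWronskian (r x : ℂ) : (sinCosWronskian r x).det = -r := by
  rw [sinCosWronskian, Matrix.det_fin_two_of]
  linear_combination (-r) * sin_sq_add_cos_sq (r * x)

theorem stmt7_general (a lam c₀ r₁ r₂ α₃ : ℂ)
    (p q : ℂ)
    (hp : p = (lam ^ 2 - a * r₁ ^ 2) / (Complex.I * lam * c₀))
    (hq : q = (lam ^ 2 - a * r₂ ^ 2) / (Complex.I * lam * c₀)) :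
    Matrix.det
      !![Complex.sin (r₁ * α₃), Complex.cos (r₁ * α₃), Complex.sin (r₂ * α₃), Complex.cos (r₂ * α₃);
         r₁ * Complex.cos (r₁ * α₃), -(r₁ * Complex.sin (r₁ * α₃)), r₂ * Complex.cos (r₂ * α₃), -(r₂ * Complex.sin (r₂ * α₃));
         p * Complex.sin (r₁ * α₃), p * Complex.cos (r₁ * α₃), q * Complex.sin (r₂ * α₃), q * Complex.cos (r₂ * α₃);
         p * r₁ * Complex.cos (r₁ * α₃), -(p * r₁ * Complex.sin (r₁ * α₃)), q * r₂ * Complex.cos (r₂ * α₃), -(q * r₂ * Complex.sin (r₂ * α₃))]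
      = -(r₁ * r₂ * a ^ 2 * (r₁ ^ 2 - r₂ ^ 2) ^ 2) / (lam ^ 2 * c₀ ^ 2) := by
  have hqp : q - p = a * (r₁ ^ 2 - r₂ ^ 2) / (Complex.I * lam * c₀) := by
    rw [hp, hq, ← sub_div]
    ring
  calc _ = (Matrix.reindex finSumFinEquiv finSumFinEquiv (Matrix.fromBlocks
          (sinCosWronskian r₁ α₃) (sinCosWronskian r₂ α₃)
          (p • sinCosWronskian r₁ α₃) (q • sinCosWronskian r₂ α₃))).det := by
        congr 1
        ext i j
        fin_cases i <;> fin_cases j <;>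
          simp [sinCosWronskian, finSumFinEquiv, Fin.addCases, mul_assoc]
    _ = (q - p) ^ 2 * -r₁ * -r₂ := by
        rw [Matrix.det_reindex_self, Matrix.det_fromBlocks_smul_smul, det_sinCosWronskian,
          det_sinCosWronskian, Fintype.card_fin]
    _ = _ := by
        rw [hqp, div_pow, mul_pow, mul_pow, mul_pow, I_sq]
        ring

/-- determinant of the boundary-condition matrix M₃ (case λ² > c₀²). -/
theorem stmt7 (a lam c₀ r₁ r₂ α₃ : ℂ) (hlam : lam ≠ 0) (hc : c₀ ≠ 0)
    (p q : ℂ)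
    (hp : p = (lam ^ 2 - a * r₁ ^ 2) / (Complex.I * lam * c₀))
    (hq : q = (lam ^ 2 - a * r₂ ^ 2) / (Complex.I * lam * c₀)) :
    Matrix.det
      !![Complex.sin (r₁ * α₃), Complex.cos (r₁ * α₃), Complex.sin (r₂ * α₃), Complex.cos (r₂ * α₃);
         r₁ * Complex.cos (r₁ * α₃), -(r₁ * Complex.sin (r₁ * α₃)), r₂ * Complex.cos (r₂ * α₃), -(r₂ * Complex.sin (r₂ * α₃));
         p * Complex.sin (r₁ * α₃), p * Complex.cos (r₁ * α₃), q * Complex.sin (r₂ * α₃), q * Complex.cos (r₂ * α₃);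
         p * r₁ * Complex.cos (r₁ * α₃), -(p * r₁ * Complex.sin (r₁ * α₃)), q * r₂ * Complex.cos (r₂ * α₃), -(q * r₂ * Complex.sin (r₂ * α₃))]
      = -(r₁ * r₂ * a ^ 2 * (r₁ ^ 2 - r₂ ^ 2) ^ 2) / (lam ^ 2 * c₀ ^ 2) :=
  stmt7_general a lam c₀ r₁ r₂ α₃ p q hp hq
end
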